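/- Let V be a pure isometry of multiplicity n on a Hilbert space K (V unitarily equivalent to the unilateral shift of multiplicity n, 1 ≤ n < ∞), and let A = WOT-Alg{V, I}. Then A does not have property A_{n+1}. -/

import Mathlib

open ContinuousLinearMap

/-- The weak operator topology on `B(K)`. -/
noncomputable def wotTopology (K : Type*) [NormedAddCommGroup K] [InnerProductSpace ℂ K] :
    TopologicalSpace (K →L[ℂ] K) :=
  TopologicalSpace.induced
    (fun T => (fun p : K × K => (inner (𝕜 := ℂ) (T p.1) p.2 : ℂ))) inferInstance

open Filter
set_option linter.unusedSectionVars false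
set_option maxHeartbeats 1000000

section Aux
variable {K : Type*} [NormedAddCommGroup K] [InnerProductSpace ℂ K] [CompleteSpace K]
local notation "⟪" x ", " y "⟫" => (inner ℂ x y : ℂ)

lemma hAV {V : K →L[ℂ] K} (hiso : adjoint V * V = 1) (x : K) : adjoint V (V x) = x := by
  have := congrArg (fun (T : K →L[ℂ] K) => T x) hiso
  simpa using this

lemma hinnerVV {V : K →L[ℂ] K} (hiso : adjoint V * V = 1) (x y : K) : ⟪V x, V y⟫ = ⟪x, y⟫ := by
  rw [← adjoint_inner_left V y (V x), hAV hiso]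

lemma hpow_apply (V : K →L[ℂ] K) (m : ℕ) (x : K) : (V ^ (m+1)) x = (V ^ m) (V x) := by
  rw [pow_succ]; rfl

lemma hpow_apply' (V : K →L[ℂ] K) (m : ℕ) (x : K) : (V ^ (m+1)) x = V ((V ^ m) x) := by
  rw [pow_succ']; rfl

lemma hpow_add (V : K →L[ℂ] K) (a b : ℕ) (x : K) : (V ^ (a+b)) x = (V ^ a) ((V ^ b) x) := by
  rw [pow_add]; rfl

lemma hpinner {V : K →L[ℂ] K} (hiso : adjoint V * V = 1) (m : ℕ) (x y : K) :
    ⟪(V ^ m) x, (V ^ m) y⟫ = ⟪x, y⟫ := by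
  induction m generalizing x y with
  | zero => simp
  | succ m ih => rw [hpow_apply, hpow_apply, ih, hinnerVV hiso]

lemma hadjpow (V : K →L[ℂ] K) (m : ℕ) (x y : K) :
    ⟪(V ^ m) x, y⟫ = ⟪x, ((adjoint V) ^ m) y⟫ := by
  induction m generalizing x y with
  | zero => simp
  | succ m ih =>
    rw [hpow_apply, ih, hpow_apply' (adjoint V) m y, ← adjoint_inner_right]

lemma hadjpow' (V : K →L[ℂ] K) (m : ℕ) (x y : K) :
    ⟪x, (V ^ m) y⟫ = ⟪((adjoint V) ^ m) x, y⟫ := by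
  rw [← inner_conj_symm, hadjpow, ← inner_conj_symm ((adjoint V ^ m) x) y]

lemma hApowV {V : K →L[ℂ] K} (hiso : adjoint V * V = 1) (k : ℕ) (x : K) :
    ((adjoint V) ^ k) ((V ^ k) x) = x := by
  induction k generalizing x with
  | zero => simp
  | succ k ih => rw [hpow_apply' V, hpow_apply (adjoint V), hAV hiso, ih]

lemma hnormV {V : K →L[ℂ] K} (hiso : adjoint V * V = 1) (m : ℕ) (x : K) :
    ‖(V ^ m) x‖ = ‖x‖ := by
  have h := hpinner hiso m x x
  rw [inner_self_eq_norm_sq_to_K, inner_self_eq_norm_sq_to_K] at h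
  have h2 : (‖(V ^ m) x‖:ℝ) ^ 2 = (‖x‖:ℝ) ^ 2 := by exact_mod_cast h
  nlinarith [norm_nonneg ((V^m) x), norm_nonneg x]


lemma hE_apply (V : K →L[ℂ] K) (x : K) :
    ((1 - V * adjoint V : K →L[ℂ] K)) x = x - V (adjoint V x) := by
  simp [ContinuousLinearMap.sub_apply, ContinuousLinearMap.mul_apply]

lemma hE_V {V : K →L[ℂ] K} (hiso : adjoint V * V = 1) (x : K) :
    ((1 - V * adjoint V : K →L[ℂ] K)) (V x) = 0 := by
  rw [hE_apply, hAV hiso, sub_self]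

lemma hAE {V : K →L[ℂ] K} (hiso : adjoint V * V = 1) (x : K) :
    adjoint V (((1 - V * adjoint V : K →L[ℂ] K)) x) = 0 := by
  rw [hE_apply, map_sub, hAV hiso, sub_self]

lemma hE_idem {V : K →L[ℂ] K} (hiso : adjoint V * V = 1) (x : K) :
    ((1 - V * adjoint V : K →L[ℂ] K)) (((1 - V * adjoint V : K →L[ℂ] K)) x)
      = ((1 - V * adjoint V : K →L[ℂ] K)) x := by
  conv_lhs => rw [hE_apply V (((1 - V * adjoint V : K →L[ℂ] K)) x), hAE hiso]
  simp

lemma hE_adj (V : K →L[ℂ] K) :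
    adjoint ((1 - V * adjoint V : K →L[ℂ] K)) = (1 - V * adjoint V : K →L[ℂ] K) := by
  rw [← star_eq_adjoint, star_sub, star_one, star_mul, star_eq_adjoint, star_eq_adjoint,
    adjoint_adjoint]

lemma hE_sym (V : K →L[ℂ] K) (x y : K) :
    ⟪((1 - V * adjoint V : K →L[ℂ] K)) x, y⟫ = ⟪x, ((1 - V * adjoint V : K →L[ℂ] K)) y⟫ := by
  rw [← adjoint_inner_right, hE_adj]

lemma hE_norm {V : K →L[ℂ] K} (hiso : adjoint V * V = 1) (x : K) :
    ‖((1 - V * adjoint V : K →L[ℂ] K)) x‖ ^ 2 = ‖x‖ ^ 2 - ‖adjoint V x‖ ^ 2 := by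
  have h : ⟪((1 - V * adjoint V : K →L[ℂ] K)) x, ((1 - V * adjoint V : K →L[ℂ] K)) x⟫
      = ⟪x, x⟫ - ⟪adjoint V x, adjoint V x⟫ := by
    rw [hE_sym, hE_idem hiso]
    rw [hE_apply, inner_sub_right, ← adjoint_inner_left]
  rw [inner_self_eq_norm_sq_to_K, inner_self_eq_norm_sq_to_K, inner_self_eq_norm_sq_to_K] at h
  exact_mod_cast h

lemma htelescope {V : K →L[ℂ] K} (hiso : adjoint V * V = 1) (M : ℕ) (x : K) :
    ∑ m ∈ Finset.range (M+1), ‖((1 - V * adjoint V : K →L[ℂ] K)) (((adjoint V) ^ m) x)‖ ^ 2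
      = ‖x‖ ^ 2 - ‖((adjoint V) ^ (M+1)) x‖ ^ 2 := by
  induction M with
  | zero => simpa using hE_norm hiso x
  | succ M ih =>
    rw [Finset.sum_range_succ, ih, hE_norm hiso, hpow_apply' (adjoint V) (M+1) x]
    ring

lemma hAnorm_le {V : K →L[ℂ] K} (hiso : adjoint V * V = 1) (z : K) :
    ‖adjoint V z‖ ≤ ‖z‖ := by
  have h1 : ‖adjoint V z‖ ^ 2 = ‖z‖ ^ 2 - ‖((1 - V * adjoint V : K →L[ℂ] K)) z‖ ^ 2 := by
    have := hE_norm hiso z; linarith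
  nlinarith [norm_nonneg (adjoint V z), norm_nonneg z,
    sq_nonneg ‖((1 - V * adjoint V : K →L[ℂ] K)) z‖]

lemma hA_anti {V : K →L[ℂ] K} (hiso : adjoint V * V = 1) (x : K) :
    Antitone (fun m => ‖((adjoint V) ^ m) x‖ ^ 2) := by
  have step : ∀ m, ‖((adjoint V) ^ (m+1)) x‖ ^ 2 ≤ ‖((adjoint V) ^ m) x‖ ^ 2 := by
    intro m
    rw [hpow_apply' (adjoint V) m x]
    have := hAnorm_le hiso (((adjoint V) ^ m) x)
    nlinarith [norm_nonneg (adjoint V (((adjoint V) ^ m) x))]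
  exact antitone_nat_of_succ_le step

lemma htail_zero {V : K →L[ℂ] K} (hiso : adjoint V * V = 1)
    (hpure : ∀ x : K, (∀ m : ℕ, ∃ y : K, (V ^ m) y = x) → x = 0) (x : K) :
    Tendsto (fun m => ‖((adjoint V) ^ m) x‖ ^ 2) atTop (nhds 0) := by
  set A := adjoint V with hA
  set c : ℕ → ℝ := fun m => ‖(A ^ m) x‖ ^ 2 with hc
  set p : ℕ → K := fun m => (V ^ m) ((A ^ m) x) with hp
  -- inner products of the p sequence
  have hpinnerP : ∀ N M : ℕ, N ≤ M → ⟪p N, p M⟫ = (c M : ℂ) := by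
    intro N M hNM
    obtain ⟨r, rfl⟩ := Nat.exists_eq_add_of_le hNM
    rw [hp]
    simp only
    rw [hpow_add V N r ((A ^ (N+r)) x), hpinner hiso]
    rw [hadjpow' V r]
    have h5 : (A ^ r) ((A ^ N) x) = (A ^ (N + r)) x := by
      rw [add_comm, pow_add]; rfl
    rw [h5, inner_self_eq_norm_sq_to_K]
    norm_cast
  have hpnormsq : ∀ N M : ℕ, N ≤ M → ‖p N - p M‖ ^ 2 = c N - c M := by
    intro N M hNM
    have h1 : ⟪p N - p M, p N - p M⟫ = ((c N : ℂ)) - (c M : ℂ) := by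
      rw [inner_sub_sub_self]
      rw [hpinnerP N M hNM, hpinnerP N N le_rfl]
      have h2 : ⟪p M, p N⟫ = (c M : ℂ) := by
        rw [← inner_conj_symm, hpinnerP N M hNM]
        simp
      rw [h2, hpinnerP M M le_rfl]
      ring
    rw [inner_self_eq_norm_sq_to_K] at h1
    have h2 : ((‖p N - p M‖ ^ 2 : ℝ) : ℂ) = ((c N - c M : ℝ) : ℂ) := by push_cast; exact h1
    exact_mod_cast h2
  -- c converges
  have hanti := hA_anti hiso x
  have hcbdd : BddBelow (Set.range c) := ⟨0, by rintro y ⟨m, rfl⟩; positivity⟩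
  have hcconv : Tendsto c atTop (nhds (⨅ m, c m)) :=
    tendsto_atTop_ciInf hanti hcbdd
  have hcCauchy : CauchySeq c := hcconv.cauchySeq
  -- p is Cauchy
  have hpCauchy : CauchySeq p := by
    rw [Metric.cauchySeq_iff'] at hcCauchy ⊢
    intro ε hε
    obtain ⟨N, hN⟩ := hcCauchy (ε ^ 2) (by positivity)
    refine ⟨N, fun m hm => ?_⟩
    have h1 : dist (c m) (c N) < ε ^ 2 := hN m hm
    have h2 : ‖p N - p m‖ ^ 2 = c N - c m := hpnormsq N m hm
    rw [Real.dist_eq, abs_lt] at h1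
    rw [dist_eq_norm]
    have h3 : ‖p m - p N‖ ^ 2 < ε ^ 2 := by
      rw [← norm_neg, neg_sub]; nlinarith
    nlinarith [norm_nonneg (p m - p N)]
  obtain ⟨y, hy⟩ := cauchySeq_tendsto_of_complete hpCauchy
  -- y is in the range of every power
  have hyr : ∀ m : ℕ, ∃ z : K, (V ^ m) z = y := by
    intro m
    have hclosed : IsClosed (Set.range (fun z => (V ^ m) z)) := by
      have hisom : Isometry (fun z => (V ^ m) z) :=
        AddMonoidHomClass.isometry_of_norm (V ^ m) (hnormV hiso m)
      exact hisom.isClosedEmbedding.isClosed_range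
    have hmem : y ∈ Set.range (fun z => (V ^ m) z) := by
      have : ∀ᶠ M in atTop, p M ∈ Set.range (fun z => (V ^ m) z) := by
        rw [eventually_atTop]
        refine ⟨m, fun M hM => ?_⟩
        obtain ⟨r, rfl⟩ := Nat.exists_eq_add_of_le hM
        refine ⟨(V ^ r) ((A ^ (m+r)) x), ?_⟩
        show (V ^ m) ((V ^ r) ((A ^ (m+r)) x)) = (V ^ (m+r)) ((A ^ (m+r)) x)
        rw [← hpow_add]
      exact hclosed.mem_of_tendsto hy this
    exact hmem
  have hy0 : y = 0 := hpure y hyr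
  -- conclude
  have hctozero : Tendsto c atTop (nhds 0) := by
    have h1 : Tendsto (fun m => (⟪p m, x⟫ : ℂ)) atTop (nhds ⟪y, x⟫) := by
      exact Tendsto.inner hy tendsto_const_nhds
    rw [hy0, inner_zero_left] at h1
    have h2 : ∀ m, (c m : ℂ) = ⟪p m, x⟫ := by
      intro m
      rw [hp]
      simp only
      rw [hadjpow V m ((A^m) x) x]
      show (c m : ℂ) = ⟪(A ^ m) x, (A ^ m) ((A ^ 0) x)⟫
      rw [pow_zero]
      show (c m : ℂ) = ⟪(A ^ m) x, (A ^ m) x⟫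
      rw [inner_self_eq_norm_sq_to_K]
      norm_cast
    have h3 : Tendsto (fun m => ((c m : ℂ)).re) atTop (nhds ((0:ℂ).re)) := by
      refine Tendsto.comp Complex.continuous_re.continuousAt ?_
      simpa only [← h2] using h1
    simpa using h3
  exact hctozero

lemma wand_inner {ι : Type*} [DecidableEq ι] {V : K →L[ℂ] K} (hiso : adjoint V * V = 1)
    (u : ι → K) (hu : Orthonormal ℂ u)
    (hw : ∀ (m : ℕ) (i j : ι), ⟪(V ^ (m+1)) (u i), u j⟫ = 0)
    (k l : ℕ) (i j : ι) :
    ⟪(V ^ k) (u i), (V ^ l) (u j)⟫ = if k = l ∧ i = j then 1 else 0 := by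
  have aux : ∀ (k r : ℕ) (i j : ι),
      ⟪(V ^ k) (u i), (V ^ (k + r)) (u j)⟫ = if r = 0 ∧ i = j then 1 else 0 := by
    intro k r i j
    rw [hpow_add V k r, hpinner hiso]
    cases r with
    | zero => simpa using orthonormal_iff_ite.mp hu i j
    | succ s =>
      have h0 : ⟪u i, (V ^ (s+1)) (u j)⟫ = 0 := by
        rw [← inner_conj_symm, hw s j i, map_zero]
      rw [h0]
      simp
  rcases le_total k l with h | h
  · obtain ⟨r, rfl⟩ := Nat.exists_eq_add_of_le h
    rw [aux k r i j]
    have hcond : (k = k + r) ↔ (r = 0) := by omega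
    simp only [hcond]
  · obtain ⟨r, rfl⟩ := Nat.exists_eq_add_of_le h
    rw [← inner_conj_symm, aux l r j i]
    by_cases hc : r = 0 ∧ j = i
    · simp [hc.1, hc.2]
    · rw [if_neg hc, map_zero, if_neg]
      rintro ⟨h1, h2⟩
      exact hc ⟨by omega, h2.symm⟩

lemma counting {n : ℕ} {V : K →L[ℂ] K} (hiso : adjoint V * V = 1)
    (htail : ∀ x : K, Tendsto (fun m => ‖((adjoint V) ^ m) x‖ ^ 2) atTop (nhds 0))
    (d : Fin n → K) (hd_on : Orthonormal ℂ d)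
    (hd_mem : ∀ s, ((1 - V * adjoint V : K →L[ℂ] K)) (d s) = d s)
    (hd_par : ∀ u : K, ((1 - V * adjoint V : K →L[ℂ] K)) u = u →
        ‖u‖ ^ 2 = ∑ s : Fin n, ‖⟪d s, u⟫‖ ^ 2)
    (w : Fin (n+1) → K) (hw_on : Orthonormal ℂ w)
    (hw : ∀ (m : ℕ) (i j : Fin (n+1)), ⟪(V ^ (m+1)) (w i), w j⟫ = 0) : False := by
  set A := adjoint V with hA
  set ε : ℝ := 1 / (2*(n+1)) with hε
  have hεpos : 0 < ε := by positivity
  -- choose M₀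
  have hev : ∀ᶠ m in atTop, ∀ i : Fin (n+1), ‖(A ^ m) (w i)‖ ^ 2 < ε :=
    eventually_all.2 fun i => (htail (w i)).eventually_lt_const hεpos
  obtain ⟨M₀, hM₀⟩ := eventually_atTop.mp hev
  set M : ℕ := M₀ * (2*n+1) with hM
  set L : ℕ := 2*n*M₀ + 1 with hL
  have hMeq : M = 2*n*M₀ + M₀ := by rw [hM]; ring
  have hLM : L ≤ M + 1 := by omega
  -- the two families
  set ew : Fin L × Fin (n+1) → K := fun p => (V ^ (p.1 : ℕ)) (w p.2) with hew
  set ff : Fin (M+1) × Fin n → K := fun p => (V ^ (p.1 : ℕ)) (d p.2) with hff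
  have hew_on : Orthonormal ℂ ew := by
    rw [orthonormal_iff_ite]
    rintro ⟨k, i⟩ ⟨l, j⟩
    rw [hew]
    simp only
    rw [wand_inner hiso w hw_on hw]
    simp [Prod.ext_iff, Fin.val_inj]
  have hff_norm : ∀ β, ‖ff β‖ = 1 := by
    rintro ⟨m, s⟩
    rw [hff]
    simp only
    rw [hnormV hiso]
    exact hd_on.1 s
  -- upper bound per β (Bessel)
  have hup : ∀ β, ∑ α : Fin L × Fin (n+1), ‖⟪ew α, ff β⟫‖ ^ 2 ≤ 1 := by
    intro β
    have h := hew_on.sum_inner_products_le (s := Finset.univ) (ff β)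
    rwa [hff_norm β, one_pow] at h
  -- lower bound per α
  have hlow : ∀ α : Fin L × Fin (n+1), (1 : ℝ) - ε ≤ ∑ β : Fin (M+1) × Fin n, ‖⟪ff β, ew α⟫‖ ^ 2 := by
    rintro ⟨k, i⟩
    have hkL : (k : ℕ) < L := k.2
    have hz : ∀ m : ℕ, ∑ s : Fin n, ‖⟪(V ^ m) (d s), ew (k, i)⟫‖ ^ 2
        = ‖((1 - V * A : K →L[ℂ] K)) ((A ^ m) (ew (k, i)))‖ ^ 2 := by
      intro m
      have heach : ∀ s, ⟪(V ^ m) (d s), ew (k, i)⟫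
          = ⟪d s, ((1 - V * A : K →L[ℂ] K)) ((A ^ m) (ew (k, i)))⟫ := by
        intro s
        rw [hadjpow]
        conv_lhs => rw [← hd_mem s]
        rw [hE_sym]
      simp only [heach]
      exact (hd_par _ (hE_idem hiso _)).symm
    have hsum : ∑ β : Fin (M+1) × Fin n, ‖⟪ff β, ew (k, i)⟫‖ ^ 2
        = ∑ m ∈ Finset.range (M+1), ‖((1 - V * A : K →L[ℂ] K)) ((A ^ m) (ew (k, i)))‖ ^ 2 := by
      rw [Fintype.sum_prod_type, Finset.sum_range fun m => _]
      · exact Finset.sum_congr rfl fun m _ => hz (m : ℕ)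
    rw [hsum, htelescope hiso M (ew (k, i))]
    have hnorm1 : ‖ew (k, i)‖ = 1 := by
      rw [hew]; simp only; rw [hnormV hiso]; exact hw_on.1 i
    have htail_small : ‖(A ^ (M+1)) (ew (k, i))‖ ^ 2 ≤ ε := by
      have hk : (k : ℕ) ≤ M := by omega
      have hrw : (A ^ (M+1)) (ew (k, i)) = (A ^ (M + 1 - (k:ℕ))) (w i) := by
        rw [hew]
        simp only
        have h1 : M + 1 = (M + 1 - (k:ℕ)) + (k:ℕ) := by omega
        conv_lhs => rw [h1]
        rw [hpow_add A, hApowV hiso]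
      rw [hrw]
      have hge : M + 1 - (k:ℕ) ≥ M₀ := by omega
      exact le_of_lt (hM₀ _ hge i)
    rw [hnorm1]
    nlinarith [htail_small]
  -- combine
  set S : ℝ := ∑ α : Fin L × Fin (n+1), ∑ β : Fin (M+1) × Fin n, ‖⟪ff β, ew α⟫‖ ^ 2 with hS
  have hlower : (L * (n+1) : ℝ) * (1 - ε) ≤ S := by
    have h1 : ∑ α : Fin L × Fin (n+1), ((1:ℝ) - ε) ≤ S :=
      Finset.sum_le_sum fun α _ => hlow α
    calc (L * (n+1) : ℝ) * (1 - ε)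
        = ∑ α : Fin L × Fin (n+1), ((1:ℝ) - ε) := by
          rw [Finset.sum_const, Finset.card_univ, Fintype.card_prod, Fintype.card_fin,
            Fintype.card_fin, nsmul_eq_mul]
          push_cast
          ring
      _ ≤ S := h1
  have hupper : S ≤ ((M+1) * n : ℝ) := by
    have h0 : S = ∑ β : Fin (M+1) × Fin n, ∑ α : Fin L × Fin (n+1), ‖⟪ew α, ff β⟫‖ ^ 2 := by
      rw [hS, Finset.sum_comm]
      exact Finset.sum_congr rfl fun β _ => Finset.sum_congr rfl fun α _ => by
        rw [norm_inner_symm]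
    rw [h0]
    calc ∑ β : Fin (M+1) × Fin n, ∑ α : Fin L × Fin (n+1), ‖⟪ew α, ff β⟫‖ ^ 2
        ≤ ∑ _β : Fin (M+1) × Fin n, (1:ℝ) := Finset.sum_le_sum fun β _ => hup β
      _ = ((M+1) * n : ℝ) := by
          rw [Finset.sum_const, Finset.card_univ, Fintype.card_prod, Fintype.card_fin,
            Fintype.card_fin, nsmul_eq_mul]
          push_cast
          ring
  have hfinal : (L * (n+1) : ℝ) * (1 - ε) ≤ ((M+1) * n : ℝ) := le_trans hlower hupper
  rw [hL, hM, hε] at hfinal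
  push_cast at hfinal
  have hn0 : (0:ℝ) ≤ (n:ℝ) := Nat.cast_nonneg n
  have hM₀0 : (0:ℝ) ≤ (M₀:ℝ) := Nat.cast_nonneg M₀
  have hden : (2*((n:ℝ)+1)) > 0 := by positivity
  have h3 : (2*(n:ℝ)*M₀+1) * ((n:ℝ)+1) * (1 - 1/(2*((n:ℝ)+1)))
      = (2*(n:ℝ)*M₀+1) * ((n:ℝ) + 1/2) := by
    field_simp
    ring
  rw [h3] at hfinal
  nlinarith [hfinal]

lemma exists_d {n : ℕ} (hn : 0 < n) {V : K →L[ℂ] K} (hiso : adjoint V * V = 1)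
    (hrank : Module.finrank ℂ
      (LinearMap.range ((1 - V * adjoint V) : K →L[ℂ] K).toLinearMap) = n) :
    ∃ d : Fin n → K, Orthonormal ℂ d ∧
      (∀ s, ((1 - V * adjoint V : K →L[ℂ] K)) (d s) = d s) ∧
      (∀ u : K, ((1 - V * adjoint V : K →L[ℂ] K)) u = u →
        ‖u‖ ^ 2 = ∑ s : Fin n, ‖⟪d s, u⟫‖ ^ 2) := by
  set E : K →L[ℂ] K := 1 - V * adjoint V with hEdef
  set D : Submodule ℂ K := LinearMap.range E.toLinearMap with hDdef
  haveI : FiniteDimensional ℂ D := FiniteDimensional.of_finrank_pos (by rw [hrank]; exact hn)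
  set b : OrthonormalBasis (Fin n) ℂ D :=
    (stdOrthonormalBasis ℂ D).reindex (finCongr (by rw [hrank])) with hbdef
  refine ⟨fun s => ((b s : D) : K), ?_, ?_, ?_⟩
  · rw [orthonormal_iff_ite]
    intro s t
    rw [← Submodule.coe_inner]
    exact orthonormal_iff_ite.mp b.orthonormal s t
  · intro s
    obtain ⟨y, hy⟩ := (b s : D).2
    have : E ((b s : D) : K) = E (E y) := by rw [← hy]; rfl
    rw [this, hE_idem hiso]
    exact hy
  · intro u hu
    have humem : u ∈ D := ⟨u, hu⟩
    set u' : D := ⟨u, humem⟩ with hu'def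
    have hnorm : ‖u‖ = ‖u'‖ := rfl
    have hcoe : ∀ s, ⟪((b s : D) : K), u⟫ = ⟪b s, u'⟫ := fun s =>
      (Submodule.coe_inner D (b s) u').symm
    simp only [hcoe]
    have hrepr : ∀ s, ⟪b s, u'⟫ = b.repr u' s := fun s => (b.repr_apply_apply u' s).symm
    simp only [hrepr]
    have h1 : ‖u'‖ = ‖b.repr u'‖ := (b.repr.norm_map u').symm
    rw [hnorm, h1, EuclideanSpace.norm_eq]
    rw [Real.sq_sqrt]
    · positivity

end Aux

section Main
local notation "⟪" x ", " y "⟫" => (inner ℂ x y : ℂ)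

/-- Let `V` be a pure isometry of multiplicity `n` on a Hilbert space `K`
(`V*V = 1`, `⋂ₘ Ran Vᵐ = 0`, `rank(1 - VV*) = n`, `1 ≤ n < ∞`), and let
`A = WOT-Alg{V, I}`.  Then `A` does not have property `𝔸_{n+1}`: there is an
`(n+1) × (n+1)` matrix of weak-* continuous functionals on `A` (each given by an
absolutely summable series of matrix coefficients) that admits no joint
representation `φᵢⱼ(T) = ⟪T ηⱼ, ζᵢ⟫`. -/
theorem stmt12 {K : Type*} [NormedAddCommGroup K] [InnerProductSpace ℂ K] [CompleteSpace K]
    {n : ℕ} (hn : 0 < n) (V : K →L[ℂ] K)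
    (hiso : adjoint V * V = 1)
    (hpure : ∀ x : K, (∀ m : ℕ, ∃ y : K, (V ^ m) y = x) → x = 0)
    (hrank : Module.finrank ℂ
      (LinearMap.range ((1 - V * adjoint V) : K →L[ℂ] K).toLinearMap) = n) :
    ¬ (∀ x y : Fin (n + 1) → Fin (n + 1) → ℕ → K,
        (∀ i j, Summable fun m => ‖x i j m‖ * ‖y i j m‖) →
        ∃ ζ η : Fin (n + 1) → K, ∀ i j,
          ∀ T ∈ @closure _ (wotTopology K) ((Algebra.adjoin ℂ {V} : Subalgebra ℂ (K →L[ℂ] K)) :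
            Set (K →L[ℂ] K)),
            ∑' m, (inner (𝕜 := ℂ) (T (x i j m)) (y i j m) : ℂ)
              = inner (𝕜 := ℂ) (T (η j)) (ζ i)) := by
  intro H
  classical
  obtain ⟨d, hd_on, hd_mem, hd_par⟩ := exists_d hn hiso hrank
  set e : K := d ⟨0, hn⟩ with hedef
  have he_norm : ‖e‖ = 1 := hd_on.1 _
  have he_mem : ((1 - V * adjoint V : K →L[ℂ] K)) e = e := hd_mem _
  have he_inner : ∀ m : ℕ, ⟪(V ^ (m+1)) e, e⟫ = 0 := by
    intro m
    calc ⟪(V ^ (m+1)) e, e⟫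
        = ⟪(V ^ (m+1)) e, ((1 - V * adjoint V : K →L[ℂ] K)) e⟫ := by rw [he_mem]
      _ = ⟪((1 - V * adjoint V : K →L[ℂ] K)) ((V ^ (m+1)) e), e⟫ := (hE_sym V _ _).symm
      _ = 0 := by rw [hpow_apply' V m e, hE_V hiso, inner_zero_left]
  -- the matrix of functionals
  set xx : Fin (n+1) → Fin (n+1) → ℕ → K :=
    fun i j m => match m with | 0 => (if i = j then e else 0) | _+1 => 0 with hxx
  set yy : Fin (n+1) → Fin (n+1) → ℕ → K :=
    fun i j m => match m with | 0 => e | _+1 => 0 with hyy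
  have hsum : ∀ i j, Summable fun m => ‖xx i j m‖ * ‖yy i j m‖ := by
    intro i j
    apply summable_of_ne_finset_zero (s := {0})
    intro m hm
    rw [Finset.mem_singleton] at hm
    match m, hm with
    | s+1, _ => show ‖(0:K)‖ * ‖(0:K)‖ = 0; simp
  obtain ⟨ζ, η, hrep⟩ := H xx yy hsum
  -- the key conditions
  have hcond : ∀ (m : ℕ) (i j : Fin (n+1)),
      ⟪(V ^ m) (η j), ζ i⟫ = if i = j ∧ m = 0 then (1 : ℂ) else 0 := by
    intro m i j
    have hmem : (V ^ m) ∈ @closure _ (wotTopology K)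
        ((Algebra.adjoin ℂ {V} : Subalgebra ℂ (K →L[ℂ] K)) : Set (K →L[ℂ] K)) := by
      letI := wotTopology K
      exact subset_closure
        (SetLike.mem_coe.mpr (pow_mem (Algebra.subset_adjoin (Set.mem_singleton V)) m))
    have h4 := hrep i j (V ^ m) hmem
    rw [← h4]
    rw [tsum_eq_single 0]
    · show ⟪(V ^ m) (if i = j then e else 0), e⟫ = _
      by_cases hij : i = j
      · rw [if_pos hij]
        cases m with
        | zero =>
          rw [if_pos ⟨hij, rfl⟩, pow_zero]
          show ⟪e, e⟫ = 1
          rw [inner_self_eq_norm_sq_to_K, he_norm]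
          norm_num
        | succ s =>
          rw [he_inner s, if_neg (by simp)]
      · rw [if_neg hij, map_zero, inner_zero_left, if_neg (fun h => hij h.1)]
    · intro m' hm'
      match m', hm' with
      | s+1, _ => show ⟪(V ^ m) (0:K), (0:K)⟫ = 0; rw [inner_zero_right]
  -- the invariant subspace N
  set N₀ : Submodule ℂ K :=
    Submodule.span ℂ (Set.range (fun p : ℕ × Fin (n+1) => (V ^ (p.1+1)) (η p.2))) with hN₀
  set N : Submodule ℂ K := N₀.topologicalClosure with hN
  haveI : CompleteSpace N := N₀.isClosed_topologicalClosure.completeSpace_coe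
  have hVN : ∀ u ∈ N, V u ∈ N := by
    intro u hu
    have hmaps : Set.MapsTo V (N₀ : Set K) (N₀ : Set K) := by
      intro z hz
      have : N₀.map (V : K →ₗ[ℂ] K) ≤ N₀ := by
        rw [hN₀, Submodule.map_span, Submodule.span_le]
        rintro _ ⟨_, ⟨p, rfl⟩, rfl⟩
        apply Submodule.subset_span
        refine ⟨(p.1+1, p.2), ?_⟩
        show (V ^ (p.1+1+1)) (η p.2) = V ((V ^ (p.1+1)) (η p.2))
        rw [← hpow_apply' V (p.1+1)]
      exact this ⟨z, hz, rfl⟩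
    have : V u ∈ closure (N₀ : Set K) :=
      map_mem_closure V.continuous (by rwa [← Submodule.topologicalClosure_coe]) hmaps
    rwa [← Submodule.topologicalClosure_coe] at this
  have hpowN : ∀ (m : ℕ), ∀ u ∈ N, (V ^ m) u ∈ N := by
    intro m
    induction m with
    | zero => intro u hu; simpa using hu
    | succ s ih => intro u hu; rw [hpow_apply V s u]; exact ih _ (hVN u hu)
  have hζN : ∀ (i : Fin (n+1)), ∀ u ∈ N, ⟪u, ζ i⟫ = 0 := by
    intro i u hu
    have hN₀z : ∀ z ∈ N₀, ⟪z, ζ i⟫ = 0 := by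
      intro z hz
      induction hz using Submodule.span_induction with
      | mem z hzmem =>
        obtain ⟨p, rfl⟩ := hzmem
        rw [hcond (p.1+1) i p.2, if_neg (by simp)]
      | zero => exact inner_zero_left _
      | add a b _ _ ha hb => rw [inner_add_left, ha, hb, add_zero]
      | smul c a _ ha => rw [inner_smul_left, ha, mul_zero]
    have hcl : IsClosed {u : K | ⟪u, ζ i⟫ = 0} :=
      isClosed_eq (Continuous.inner continuous_id continuous_const) continuous_const
    have hsub : closure (N₀ : Set K) ⊆ {u : K | ⟪u, ζ i⟫ = 0} :=
      closure_minimal hN₀z hcl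
    exact hsub (by rwa [← Submodule.topologicalClosure_coe])
  -- the vectors q
  set q : Fin (n+1) → K := fun j => η j - (N.orthogonalProjectionOnto (η j) : K) with hq
  have hqperp : ∀ j, q j ∈ Nᗮ := fun j => Submodule.sub_starProjection_mem_orthogonal (K := N) (η j)
  have hqζ : ∀ i j, ⟪q j, ζ i⟫ = if i = j then (1:ℂ) else 0 := by
    intro i j
    rw [hq]
    simp only
    rw [inner_sub_left, hζN i _ (SetLike.coe_mem _), sub_zero]
    have h0 := hcond 0 i j
    rw [pow_zero] at h0
    simp only [ContinuousLinearMap.one_apply] at h0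
    rw [h0]
    simp
  have hq_li : LinearIndependent ℂ q := by
    rw [Fintype.linearIndependent_iff]
    intro g hg i
    have h1 := congrArg (fun z => ⟪z, ζ i⟫) hg
    simp only [inner_zero_left] at h1
    rw [sum_inner] at h1
    simp only [inner_smul_left, hqζ] at h1
    rw [Finset.sum_eq_single i (fun b _ hb => by rw [if_neg (Ne.symm hb), mul_zero])
      (fun h => absurd (Finset.mem_univ i) h)] at h1
    rw [if_pos rfl, mul_one] at h1
    exact star_eq_zero.mp h1
  -- orthonormal basis of span q
  set EW : Submodule ℂ K := Submodule.span ℂ (Set.range q) with hEW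
  haveI : FiniteDimensional ℂ EW := FiniteDimensional.span_of_finite ℂ (Set.finite_range q)
  have hfr : Module.finrank ℂ EW = n + 1 := by
    rw [hEW, finrank_span_eq_card hq_li, Fintype.card_fin]
  set bw : OrthonormalBasis (Fin (n+1)) ℂ EW :=
    (stdOrthonormalBasis ℂ EW).reindex (finCongr hfr) with hbw
  set w : Fin (n+1) → K := fun i => ((bw i : EW) : K) with hw
  have hw_on : Orthonormal ℂ w := by
    rw [orthonormal_iff_ite]
    intro s t
    rw [hw]
    simp only
    rw [← Submodule.coe_inner]
    exact orthonormal_iff_ite.mp bw.orthonormal s t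
  have hwmem : ∀ i, w i ∈ EW := fun i => SetLike.coe_mem _
  -- wandering property
  have hVEW : ∀ u ∈ EW, V u ∈ N := by
    intro u hu
    have : EW.map (V : K →ₗ[ℂ] K) ≤ N := by
      rw [hEW, Submodule.map_span, Submodule.span_le]
      rintro _ ⟨_, ⟨j, rfl⟩, rfl⟩
      show V (q j) ∈ N
      rw [hq]
      simp only
      rw [map_sub]
      apply N.sub_mem
      · have h6 : V (η j) = (V ^ (0+1)) (η j) := by rw [pow_one]
        rw [h6]
        exact N₀.le_topologicalClosure (Submodule.subset_span ⟨(0, j), rfl⟩)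
      · exact hVN _ (SetLike.coe_mem _)
    exact this ⟨u, hu, rfl⟩
  have hw_wand : ∀ (m : ℕ) (i j : Fin (n+1)), ⟪(V ^ (m+1)) (w i), w j⟫ = 0 := by
    intro m i j
    have h1 : (V ^ (m+1)) (w i) ∈ N := by
      rw [hpow_apply V m (w i)]
      exact hpowN m _ (hVEW _ (hwmem i))
    have h2 : w j ∈ Nᗮ := by
      have : EW ≤ Nᗮ := by
        rw [hEW, Submodule.span_le]
        rintro _ ⟨j', rfl⟩
        exact hqperp j'
      exact this (hwmem j)
    exact (Submodule.mem_orthogonal N (w j)).mp h2 _ h1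
  exact counting hiso (htail_zero hiso hpure) d hd_on hd_mem hd_par w hw_on hw_wand

end Main
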